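/- (CM-triviality) Let (A; R) be a finite set system with δ ≥ 0, and let A₁, A₂ be flats of PG(A; R) that are independent over A₁ ∩ A₂ (i.e., d(A₁ ∪ A₂) = d(A₁) + d(A₂) − d(A₁ ∩ A₂)). Then for any flat C, the flats A₁ ∩ C and A₂ ∩ C are independent over their intersection. -/
import Mathlib

open Finset

/-- Predimension of `X`: `|X| - |{r ∈ R : r ⊆ X}|`. -/
def delta {α : Type*} [DecidableEq α] (R : Finset (Finset α)) (X : Finset α) : ℤ :=
  (X.card : ℤ) - ((R.filter (fun r => r ⊆ X)).card : ℤ)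

/-- `F` is a flat (closed set) of the matroid on `A` with rank function `d`. -/
def IsFlat {α : Type*} [DecidableEq α] (A : Finset α) (d : Finset α → ℤ) (F : Finset α) :
    Prop :=
  F ⊆ A ∧ ∀ y ∈ A, d (insert y F) = d F → y ∈ F

section Aux
variable {α : Type*} [DecidableEq α] (R : Finset (Finset α))

lemma filter_inter_eq (X Y : Finset α) :
    R.filter (fun r => r ⊆ X) ∩ R.filter (fun r => r ⊆ Y)
      = R.filter (fun r => r ⊆ X ∩ Y) := by
  ext r
  simp only [mem_inter, mem_filter, subset_inter_iff]
  tauto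

lemma filter_union_subset (X Y : Finset α) :
    R.filter (fun r => r ⊆ X) ∪ R.filter (fun r => r ⊆ Y)
      ⊆ R.filter (fun r => r ⊆ X ∪ Y) := by
  intro r hr
  simp only [mem_union, mem_filter] at hr ⊢
  rcases hr with ⟨h, hs⟩ | ⟨h, hs⟩
  · exact ⟨h, hs.trans subset_union_left⟩
  · exact ⟨h, hs.trans subset_union_right⟩

lemma delta_union_eq_of_filter (X Y : Finset α)
    (hf : R.filter (fun r => r ⊆ X ∪ Y)
        = R.filter (fun r => r ⊆ X) ∪ R.filter (fun r => r ⊆ Y)) :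
    delta R (X ∪ Y) = delta R X + delta R Y - delta R (X ∩ Y) := by
  have hc := Finset.card_union_add_card_inter X Y
  have hfc := Finset.card_union_add_card_inter
      (R.filter (fun r => r ⊆ X)) (R.filter (fun r => r ⊆ Y))
  rw [filter_inter_eq] at hfc
  simp only [delta, hf]
  push_cast
  omega

lemma delta_submod (X Y : Finset α) :
    delta R (X ∪ Y) + delta R (X ∩ Y) ≤ delta R X + delta R Y := by
  have hc := Finset.card_union_add_card_inter X Y
  have hfc := Finset.card_union_add_card_inter
      (R.filter (fun r => r ⊆ X)) (R.filter (fun r => r ⊆ Y))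
  rw [filter_inter_eq] at hfc
  have h1 := Finset.card_le_card (filter_union_subset R X Y)
  simp only [delta]
  push_cast
  omega

lemma filter_union_eq_of_delta (X Y : Finset α)
    (h : delta R (X ∪ Y) = delta R X + delta R Y - delta R (X ∩ Y)) :
    R.filter (fun r => r ⊆ X ∪ Y)
      = R.filter (fun r => r ⊆ X) ∪ R.filter (fun r => r ⊆ Y) := by
  have hc := Finset.card_union_add_card_inter X Y
  have hfc := Finset.card_union_add_card_inter
      (R.filter (fun r => r ⊆ X)) (R.filter (fun r => r ⊆ Y))
  rw [filter_inter_eq] at hfc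
  have h1 := Finset.card_le_card (filter_union_subset R X Y)
  refine (Finset.eq_of_subset_of_card_le (filter_union_subset R X Y) ?_).symm
  simp only [delta] at h
  push_cast at h
  omega

variable (A : Finset α) (d : Finset α → ℤ)
variable (hd : ∀ X ⊆ A, IsLeast {z : ℤ | ∃ Y : Finset α, X ⊆ Y ∧ Y ⊆ A ∧ z = delta R Y} (d X))

/-- Self-sufficient set: δ is minimized at `F` among supersets in `A`. -/
def SS (F : Finset α) : Prop :=
  F ⊆ A ∧ ∀ Z : Finset α, F ⊆ Z → Z ⊆ A → delta R F ≤ delta R Z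

include hd

lemma d_le_delta {X Y : Finset α} (hXY : X ⊆ Y) (hYA : Y ⊆ A) :
    d X ≤ delta R Y :=
  (hd X (hXY.trans hYA)).2 ⟨Y, hXY, hYA, rfl⟩

lemma d_mono {X X' : Finset α} (h : X ⊆ X') (hX'A : X' ⊆ A) : d X ≤ d X' := by
  obtain ⟨Y, h1, h2, h3⟩ := (hd X' hX'A).1
  rw [h3]
  exact d_le_delta R A d hd (h.trans h1) h2

lemma ss_d_eq {F : Finset α} (hF : SS R A F) : d F = delta R F := by
  refine le_antisymm (d_le_delta R A d hd Finset.Subset.rfl hF.1) ?_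
  obtain ⟨Y, h1, h2, h3⟩ := (hd F hF.1).1
  rw [h3]
  exact hF.2 Y h1 h2

lemma flat_d_eq {F : Finset α} (hF : IsFlat A d F) : d F = delta R F := by
  obtain ⟨Y, h1, h2, h3⟩ := (hd F hF.1).1
  have hYF : Y ⊆ F := by
    intro y hy
    refine hF.2 y (h2 hy) (le_antisymm ?_ ?_)
    · have : insert y F ⊆ Y := Finset.insert_subset hy h1
      rw [h3]
      exact d_le_delta R A d hd this h2
    · exact d_mono R A d hd (Finset.subset_insert y F) ((Finset.insert_subset hy h1).trans h2)
  rw [h3, Finset.Subset.antisymm hYF h1]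

lemma flat_ss {F : Finset α} (hF : IsFlat A d F) : SS R A F := by
  refine ⟨hF.1, fun Z h1 h2 => ?_⟩
  rw [← flat_d_eq R A d hd hF]
  exact d_le_delta R A d hd h1 h2

lemma ss_inter_le {F : Finset α} (hF : SS R A F) {Z : Finset α} (hZ : Z ⊆ A) :
    delta R (Z ∩ F) ≤ delta R Z := by
  have h := delta_submod R Z F
  have h2 : delta R F ≤ delta R (Z ∪ F) :=
    hF.2 (Z ∪ F) subset_union_right (union_subset hZ hF.1)
  linarith

lemma ss_inter {F G : Finset α} (hF : SS R A F) (hG : SS R A G) : SS R A (F ∩ G) := by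
  refine ⟨inter_subset_left.trans hF.1, fun Z h1 h2 => ?_⟩
  have e : Z ∩ F ∩ G = F ∩ G := by
    apply Finset.Subset.antisymm
    · intro x hx; simp only [mem_inter] at hx ⊢; tauto
    · intro x hx
      have hxZ := h1 hx
      simp only [mem_inter] at hx ⊢
      tauto
  calc delta R (F ∩ G) = delta R (Z ∩ F ∩ G) := by rw [e]
    _ ≤ delta R (Z ∩ F) := ss_inter_le R A d hd hG (inter_subset_left.trans h2)
    _ ≤ delta R Z := ss_inter_le R A d hd hF h2

end Aux

/-- CM-triviality: if flats `A₁`, `A₂` are independent over `A₁ ∩ A₂` then for any flat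
`C`, the flats `A₁ ∩ C` and `A₂ ∩ C` are independent over their intersection. -/
theorem cm_trivial {α : Type*} [DecidableEq α]
    (A : Finset α) (R : Finset (Finset α))
    (hR : ∀ r ∈ R, r.Nonempty ∧ r ⊆ A)
    (hpos : ∀ X ⊆ A, 0 ≤ delta R X)
    (d : Finset α → ℤ)
    (hd : ∀ X ⊆ A, IsLeast {z : ℤ | ∃ Y : Finset α, X ⊆ Y ∧ Y ⊆ A ∧ z = delta R Y} (d X))
    (A₁ A₂ : Finset α) (hA₁ : IsFlat A d A₁) (hA₂ : IsFlat A d A₂)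
    (hind : d (A₁ ∪ A₂) = d A₁ + d A₂ - d (A₁ ∩ A₂))
    (C : Finset α) (hC : IsFlat A d C) :
    d ((A₁ ∩ C) ∪ (A₂ ∩ C)) =
      d (A₁ ∩ C) + d (A₂ ∩ C) - d ((A₁ ∩ C) ∩ (A₂ ∩ C)) := by
  have ss1 := flat_ss R A d hd hA₁
  have ss2 := flat_ss R A d hd hA₂
  have ssC := flat_ss R A d hd hC
  have ss12 := ss_inter R A d hd ss1 ss2
  -- δ = d on the relevant flats
  have e1 := flat_d_eq R A d hd hA₁
  have e2 := flat_d_eq R A d hd hA₂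
  have e12 := ss_d_eq R A d hd ss12
  -- independence at the δ level
  have hUA : A₁ ∪ A₂ ⊆ A := union_subset hA₁.1 hA₂.1
  have hdU : d (A₁ ∪ A₂) = delta R A₁ + delta R A₂ - delta R (A₁ ∩ A₂) := by
    rw [hind, e1, e2, e12]
  have hδU : delta R (A₁ ∪ A₂) = delta R A₁ + delta R A₂ - delta R (A₁ ∩ A₂) := by
    have h1 : d (A₁ ∪ A₂) ≤ delta R (A₁ ∪ A₂) :=
      d_le_delta R A d hd Finset.Subset.rfl hUA
    have h2 := delta_submod R A₁ A₂
    linarith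
  -- equality case of submodularity: relations in A₁ ∪ A₂ lie in A₁ or A₂
  have hfU := filter_union_eq_of_delta R A₁ A₂ hδU
  -- A₁ ∪ A₂ is self-sufficient
  have ssU : SS R A (A₁ ∪ A₂) := by
    refine ⟨hUA, fun Z h1 h2 => ?_⟩
    rw [hδU, ← hdU]
    exact d_le_delta R A d hd h1 h2
  set B₁ := A₁ ∩ C with hB₁
  set B₂ := A₂ ∩ C with hB₂
  have hBU : B₁ ∪ B₂ ⊆ A := union_subset (inter_subset_left.trans hA₁.1)
    (inter_subset_left.trans hA₂.1)
  -- B₁ ∪ B₂ is self-sufficient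
  have ssB : SS R A (B₁ ∪ B₂) := by
    refine ⟨hBU, fun Z h1 h2 => ?_⟩
    have e : Z ∩ C ∩ (A₁ ∪ A₂) = B₁ ∪ B₂ := by
      apply Finset.Subset.antisymm
      · intro x hx
        simp only [hB₁, hB₂, mem_inter, mem_union] at hx ⊢
        tauto
      · intro x hx
        have hxZ := h1 hx
        simp only [hB₁, hB₂, mem_inter, mem_union] at hx ⊢
        tauto
    calc delta R (B₁ ∪ B₂) = delta R (Z ∩ C ∩ (A₁ ∪ A₂)) := by rw [e]
      _ ≤ delta R (Z ∩ C) := ss_inter_le R A d hd ssU (inter_subset_left.trans h2)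
      _ ≤ delta R Z := ss_inter_le R A d hd ssC h2
  -- the filter equality descends to B₁, B₂
  have hfB : R.filter (fun r => r ⊆ B₁ ∪ B₂)
      = R.filter (fun r => r ⊆ B₁) ∪ R.filter (fun r => r ⊆ B₂) := by
    refine Finset.Subset.antisymm ?_ (filter_union_subset R B₁ B₂)
    intro r hr
    simp only [mem_filter] at hr
    obtain ⟨hrR, hrs⟩ := hr
    have hrC : r ⊆ C := hrs.trans (union_subset inter_subset_right inter_subset_right)
    have hrU : r ∈ R.filter (fun r => r ⊆ A₁ ∪ A₂) := by
      simp only [mem_filter]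
      exact ⟨hrR, hrs.trans (union_subset_union inter_subset_left inter_subset_left)⟩
    rw [hfU] at hrU
    simp only [mem_union, mem_filter] at hrU ⊢
    rcases hrU with ⟨_, h⟩ | ⟨_, h⟩
    · exact Or.inl ⟨hrR, subset_inter h hrC⟩
    · exact Or.inr ⟨hrR, subset_inter h hrC⟩
  have hδB := delta_union_eq_of_filter R B₁ B₂ hfB
  -- assemble
  have ssB1 := ss_inter R A d hd ss1 ssC
  have ssB2 := ss_inter R A d hd ss2 ssC
  have ssB12 : SS R A (B₁ ∩ B₂) := by
    have e : B₁ ∩ B₂ = A₁ ∩ A₂ ∩ C := by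
      ext x; simp only [hB₁, hB₂, mem_inter]; tauto
    rw [e]
    exact ss_inter R A d hd ss12 ssC
  rw [ss_d_eq R A d hd ssB, ss_d_eq R A d hd ssB1, ss_d_eq R A d hd ssB2,
    ss_d_eq R A d hd ssB12, hδB]
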